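/- arXiv:2303.14938 — 2 statements merged into one kernel-verified Lean document; each statement's English description precedes it below -/
import Mathlib

section
/- Let X = (X₁,…,Xₙ) be an isotropic, log-concave random vector in ℝⁿ with finite Poincaré constant C_P(X), and let B = E[X₁ (X ⊗ X)] ∈ ℝ^{n×n}, where (X ⊗ X)_{ij} = X_i X_j. Then ‖B‖²_HS ≤ 4 C_P(X), where ‖·‖_HS is the Hilbert–Schmidt norm. -/
open MeasureTheory Real
open scoped ENNReal RealInnerProductSpace

noncomputable section

abbrev Euc (n : ℕ) := EuclideanSpace ℝ (Fin n)

/-- A nonnegative function `g` is log-concave: `g(ax+by) ≥ g(x)^a g(y)^b`. -/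
def IsLogConcaveFun {n : ℕ} (g : Euc n → ℝ) : Prop :=
  (∀ x, 0 ≤ g x) ∧
  ∀ x y : Euc n, ∀ a b : ℝ, 0 ≤ a → 0 ≤ b → a + b = 1 →
    g x ^ a * g y ^ b ≤ g (a • x + b • y)

def IsLogConcaveMeasure {n : ℕ} (μ : Measure (Euc n)) : Prop :=
  ∃ ρ : Euc n → ℝ, Measurable ρ ∧ IsLogConcaveFun ρ ∧
    μ = volume.withDensity (fun x => ENNReal.ofReal (ρ x))

def poincareSet {n : ℕ} (μ : Measure (Euc n)) : Set ℝ :=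
  {C : ℝ | 0 ≤ C ∧ ∀ f : Euc n → ℝ, LocallyLipschitz f →
    Integrable (fun x => ‖gradient f x‖ ^ 2) μ →
    ∫ x, f x ^ 2 ∂μ - (∫ x, f x ∂μ) ^ 2 ≤ C * ∫ x, ‖gradient f x‖ ^ 2 ∂μ}

def poincareConst {n : ℕ} (μ : Measure (Euc n)) : ℝ := sInf (poincareSet μ)

def covMatrix {n : ℕ} (μ : Measure (Euc n)) : Matrix (Fin n) (Fin n) ℝ :=
  Matrix.of fun i j => ∫ x, x i * x j ∂μ - (∫ x, x i ∂μ) * (∫ x, x j ∂μ)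

def opNorm {n : ℕ} (M : Matrix (Fin n) (Fin n) ℝ) : ℝ :=
  ‖Matrix.toEuclideanCLM (𝕜 := ℝ) M‖

def IsIsotropic {n : ℕ} (μ : Measure (Euc n)) : Prop :=
  (∫ x, x ∂μ) = 0 ∧ ∀ i j, ∫ x, x i * x j ∂μ = if i = j then 1 else 0

def UniformlyLogConcave {n : ℕ} (t : ℝ) (μ : Measure (Euc n)) : Prop :=
  ∃ g : Euc n → ℝ, Measurable g ∧ IsLogConcaveFun g ∧
    μ = volume.withDensity (fun x => ENNReal.ofReal (Real.exp (-t * ‖x‖ ^ 2 / 2) * g x))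

def IsRegularPotential {n : ℕ} (ψ : Euc n → ℝ) : Prop :=
  ContDiff ℝ (⊤ : ℕ∞) ψ ∧
  (∃ ε : ℝ, 0 < ε ∧ ∀ x v : Euc n,
    ε * ‖v‖ ^ 2 ≤ iteratedFDeriv ℝ 2 ψ x ![v, v] ∧
    iteratedFDeriv ℝ 2 ψ x ![v, v] ≤ ε⁻¹ * ‖v‖ ^ 2) ∧
  (∀ m : ℕ, ∃ C : ℝ, ∃ k : ℕ, ∀ x, ‖iteratedFDeriv ℝ m ψ x‖ ≤ C * (1 + ‖x‖) ^ k)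

def IsRegularMeasure {n : ℕ} (μ : Measure (Euc n)) (ψ : Euc n → ℝ) : Prop :=
  IsRegularPotential ψ ∧ μ = volume.withDensity (fun x => ENNReal.ofReal (Real.exp (-ψ x)))

def IsTempered {n : ℕ} (ρ : Euc n → ℝ) (f : Euc n → ℝ) : Prop :=
  ContDiff ℝ (⊤ : ℕ∞) f ∧ ∀ m : ℕ, ∃ C : ℝ, 0 < C ∧ ∃ a : ℝ, 0 < a ∧ ∀ x,
    ‖iteratedFDeriv ℝ m f x‖ ≤ C / Real.sqrt (ρ x) * Real.exp (-a * ‖x‖)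

def lap {n : ℕ} (f : Euc n → ℝ) (x : Euc n) : ℝ :=
  ∑ i, iteratedFDeriv ℝ 2 f x ![EuclideanSpace.single i (1:ℝ), EuclideanSpace.single i (1:ℝ)]

def Lop {n : ℕ} (ψ u : Euc n → ℝ) (x : Euc n) : ℝ :=
  lap u x - ⟪gradient ψ x, gradient u x⟫

def gaussDensity (n : ℕ) (s : ℝ) (x : Euc n) : ℝ :=
  (2 * π * s) ^ (-(n : ℝ) / 2) * Real.exp (-‖x‖ ^ 2 / (2 * s))

def gaussMeasure (n : ℕ) (s : ℝ) : Measure (Euc n) :=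
  volume.withDensity fun x => ENNReal.ofReal (gaussDensity n s x)

def tiltZ {n : ℕ} (ρ : Euc n → ℝ) (t : ℝ) (θ : Euc n) : ℝ :=
  ∫ x, Real.exp (⟪θ, x⟫ - t * ‖x‖ ^ 2 / 2) * ρ x

def tiltDensity {n : ℕ} (ρ : Euc n → ℝ) (t : ℝ) (θ : Euc n) (x : Euc n) : ℝ :=
  Real.exp (⟪θ, x⟫ - t * ‖x‖ ^ 2 / 2) * ρ x / tiltZ ρ t θ

def tiltMeasure {n : ℕ} (ρ : Euc n → ℝ) (t : ℝ) (θ : Euc n) : Measure (Euc n) :=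
  volume.withDensity fun x => ENNReal.ofReal (tiltDensity ρ t θ x)

def varD {n : ℕ} (p : Euc n → ℝ) (f : Euc n → ℝ) : ℝ :=
  (∫ x, f x ^ 2 * p x) - (∫ x, f x * p x) ^ 2

end

section AuxProofs

open Filter Topology

private lemma clamp_eq_self {R t : ℝ} (h : |t| ≤ R) : max (-R) (min R t) = t := by
  rw [abs_le] at h; rw [min_eq_right h.2, max_eq_right h.1]

private lemma abs_clamp {R t : ℝ} (hR : 0 ≤ R) : |max (-R) (min R t)| = min R |t| := by
  rcases le_total 0 t with ht | ht
  · have h1 : 0 ≤ min R t := le_min hR ht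
    rw [max_eq_right ((neg_nonpos.mpr hR).trans h1), abs_of_nonneg h1, abs_of_nonneg ht]
  · rw [min_eq_right (ht.trans hR)]
    rcases le_total (-R) t with h | h
    · rw [max_eq_right h, abs_of_nonpos ht, min_eq_right (by linarith)]
    · rw [max_eq_left h, abs_of_nonpos ht, abs_neg, abs_of_nonneg hR, min_eq_left (by linarith)]

private lemma fderiv_clamp_le {n : ℕ} {f : Euc n → ℝ} (hf : Continuous f) {R : ℝ} (hR : 0 ≤ R)
    (x : Euc n) :
    ‖fderiv ℝ (fun y => max (-R) (min R (f y))) x‖ ≤ ‖fderiv ℝ f x‖ := by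
  rcases le_or_gt R (f x) with h | h
  · have hmax : IsLocalMax (fun y => max (-R) (min R (f y))) x := by
      apply Filter.Eventually.of_forall
      intro y
      simp only
      rw [min_eq_left h, max_eq_right (neg_le_self hR)]
      exact max_le (neg_le_self hR) (min_le_left _ _)
    rw [hmax.fderiv_eq_zero, norm_zero]; exact norm_nonneg _
  rcases le_or_gt (f x) (-R) with h2 | h2
  · have hmin : IsLocalMin (fun y => max (-R) (min R (f y))) x := by
      apply Filter.Eventually.of_forall
      intro y
      simp only
      rw [min_eq_right (h2.trans (neg_le_self hR)), max_eq_left h2]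
      exact le_max_left _ _
    rw [hmin.fderiv_eq_zero, norm_zero]; exact norm_nonneg _
  · have hmem : {y : Euc n | f y ∈ Set.Ioo (-R) R} ∈ nhds x :=
      hf.continuousAt.preimage_mem_nhds (Ioo_mem_nhds h2 h)
    have heq : (fun y => max (-R) (min R (f y))) =ᶠ[nhds x] f := by
      filter_upwards [hmem] with y hy
      exact clamp_eq_self (abs_le.mpr ⟨hy.1.le, hy.2.le⟩)
    rw [heq.fderiv_eq]

private lemma norm_gradient {n : ℕ} (f : Euc n → ℝ) (x : Euc n) :
    ‖gradient f x‖ = ‖fderiv ℝ f x‖ := by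
  rw [gradient]; exact LinearIsometryEquiv.norm_map _ _

private lemma meas_grad_sq {n : ℕ} (f : Euc n → ℝ) :
    Measurable fun x : Euc n => ‖gradient f x‖ ^ 2 := by
  simp_rw [norm_gradient]
  exact ((measurable_fderiv ℝ f).norm).pow_const 2


private lemma lemmaA {n : ℕ} (μ : Measure (Euc n)) [IsProbabilityMeasure μ]
    {C : ℝ} (hC : C ∈ poincareSet μ) (f : Euc n → ℝ) (hf : LocallyLipschitz f)
    (hfi : Integrable f μ) (hgi : Integrable (fun x => ‖gradient f x‖ ^ 2) μ) :
    Integrable (fun x => f x ^ 2) μ ∧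
      ∫ x, f x ^ 2 ∂μ - (∫ x, f x ∂μ) ^ 2 ≤ C * ∫ x, ‖gradient f x‖ ^ 2 ∂μ := by
  obtain ⟨hC0, hCP⟩ := hC
  have hcont : Continuous f := hf.continuous
  set u : ℕ → Euc n → ℝ := fun k x => max (-(k : ℝ)) (min (k : ℝ) (f x)) with hu
  have hkR : ∀ k : ℕ, (0 : ℝ) ≤ (k : ℝ) := fun k => Nat.cast_nonneg k
  have hu_cont : ∀ k, Continuous (u k) :=
    fun k => continuous_const.max (continuous_const.min hcont)
  have habs_le : ∀ k x, |u k x| ≤ |f x| := by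
    intro k x
    rw [hu]
    simp only
    rw [abs_clamp (hkR k)]
    exact min_le_right _ _
  have habs_lek : ∀ k x, |u k x| ≤ (k : ℝ) := by
    intro k x
    rw [hu]
    simp only
    rw [abs_clamp (hkR k)]
    exact min_le_left _ _
  have hu_lip : ∀ k, LocallyLipschitz (u k) := fun k =>
    (((LipschitzWith.id.const_min (k : ℝ)).const_max (-(k : ℝ))).locallyLipschitz).comp hf
  have hgrad_le : ∀ k x, ‖gradient (u k) x‖ ≤ ‖gradient f x‖ := by
    intro k x
    rw [norm_gradient, norm_gradient]
    exact fderiv_clamp_le hcont (hkR k) x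
  have hgmeask : ∀ k, Integrable (fun x => ‖gradient (u k) x‖ ^ 2) μ := by
    intro k
    refine hgi.mono' (meas_grad_sq (u k)).aestronglyMeasurable (ae_of_all _ fun x => ?_)
    rw [Real.norm_eq_abs, abs_of_nonneg (by positivity)]
    exact pow_le_pow_left₀ (norm_nonneg _) (hgrad_le k x) 2
  have hui : ∀ k, Integrable (u k) μ := by
    intro k
    refine hfi.mono (hu_cont k).aestronglyMeasurable (ae_of_all _ fun x => ?_)
    rw [Real.norm_eq_abs, Real.norm_eq_abs]
    exact habs_le k x
  have husqi : ∀ k, Integrable (fun x => u k x ^ 2) μ := by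
    intro k
    refine (integrable_const ((k : ℝ) ^ 2)).mono ((hu_cont k).pow 2).aestronglyMeasurable
      (ae_of_all _ fun x => ?_)
    rw [Real.norm_eq_abs, Real.norm_eq_abs, abs_of_nonneg (by positivity : (0:ℝ) ≤ (k:ℝ)^2),
      abs_of_nonneg (sq_nonneg _), ← sq_abs (u k x)]
    exact pow_le_pow_left₀ (abs_nonneg _) (habs_lek k x) 2
  have hP : ∀ k, ∫ x, u k x ^ 2 ∂μ - (∫ x, u k x ∂μ) ^ 2 ≤ C * ∫ x, ‖gradient (u k) x‖ ^ 2 ∂μ :=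
    fun k => hCP (u k) (hu_lip k) (hgmeask k)
  have hgrint : ∀ k, ∫ x, ‖gradient (u k) x‖ ^ 2 ∂μ ≤ ∫ x, ‖gradient f x‖ ^ 2 ∂μ :=
    fun k => integral_mono (hgmeask k) hgi fun x => pow_le_pow_left₀ (norm_nonneg _) (hgrad_le k x) 2
  set K := ∫ x, ‖gradient f x‖ ^ 2 ∂μ with hK
  set M := ∫ x, |f x| ∂μ with hM
  have hMk : ∀ k, |∫ x, u k x ∂μ| ≤ M := by
    intro k
    have h0 : |∫ x, u k x ∂μ| ≤ ∫ x, |u k x| ∂μ := by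
      simpa [Real.norm_eq_abs] using norm_integral_le_integral_norm (μ := μ) (f := u k)
    exact h0.trans (integral_mono (hui k).abs hfi.abs (habs_le k))
  have hDk : ∀ k, ∫ x, u k x ^ 2 ∂μ ≤ C * K + M ^ 2 := by
    intro k
    have h1 := hP k
    have h2 := mul_le_mul_of_nonneg_left (hgrint k) hC0
    have h3 := hMk k
    nlinarith [abs_nonneg (∫ x, u k x ∂μ), sq_abs (∫ x, u k x ∂μ)]
  have hle : ∀ k, ∫⁻ x, ENNReal.ofReal (u k x ^ 2) ∂μ ≤ ENNReal.ofReal (C * K + M ^ 2) := by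
    intro k
    rw [← ofReal_integral_eq_lintegral_ofReal (husqi k) (ae_of_all _ fun x => sq_nonneg _)]
    exact ENNReal.ofReal_le_ofReal (hDk k)
  have hmono : Monotone fun k : ℕ => fun x => ENNReal.ofReal (u k x ^ 2) := by
    intro k m hkm
    intro x
    apply ENNReal.ofReal_le_ofReal
    have h1 : |u k x| ≤ |u m x| := by
      rw [hu]; simp only; rw [abs_clamp (hkR k), abs_clamp (hkR m)]
      exact min_le_min (Nat.cast_le.mpr hkm) le_rfl
    calc u k x ^ 2 = |u k x| ^ 2 := (sq_abs _).symm
      _ ≤ |u m x| ^ 2 := pow_le_pow_left₀ (abs_nonneg _) h1 2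
      _ = u m x ^ 2 := sq_abs _
  have hsup : ∀ x, (⨆ k : ℕ, ENNReal.ofReal (u k x ^ 2)) = ENNReal.ofReal (f x ^ 2) := by
    intro x
    apply le_antisymm
    · refine iSup_le fun k => ENNReal.ofReal_le_ofReal ?_
      calc u k x ^ 2 = |u k x| ^ 2 := (sq_abs _).symm
        _ ≤ |f x| ^ 2 := pow_le_pow_left₀ (abs_nonneg _) (habs_le k x) 2
        _ = f x ^ 2 := sq_abs _
    · have hc : u ⌈|f x|⌉₊ x = f x := clamp_eq_self (Nat.le_ceil _)
      calc ENNReal.ofReal (f x ^ 2) = ENNReal.ofReal (u ⌈|f x|⌉₊ x ^ 2) := by rw [hc]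
        _ ≤ ⨆ k : ℕ, ENNReal.ofReal (u k x ^ 2) :=
            le_iSup (fun k : ℕ => ENNReal.ofReal (u k x ^ 2)) _
  have hmeasE : ∀ k, Measurable fun x => ENNReal.ofReal (u k x ^ 2) :=
    fun k => ((hu_cont k).pow 2).measurable.ennreal_ofReal
  have hfin2 : ∫⁻ x, ENNReal.ofReal (f x ^ 2) ∂μ < ⊤ := by
    have : ∫⁻ x, ENNReal.ofReal (f x ^ 2) ∂μ = ⨆ k : ℕ, ∫⁻ x, ENNReal.ofReal (u k x ^ 2) ∂μ := by
      rw [← lintegral_iSup hmeasE hmono]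
      exact lintegral_congr fun x => (hsup x).symm
    rw [this]
    exact lt_of_le_of_lt (iSup_le hle) ENNReal.ofReal_lt_top
  have hint2 : Integrable (fun x => f x ^ 2) μ := by
    refine ⟨(hcont.pow 2).aestronglyMeasurable, ?_⟩
    rw [hasFiniteIntegral_iff_ofReal (ae_of_all _ fun x => sq_nonneg _)]
    exact hfin2
  refine ⟨hint2, ?_⟩
  have hptw : ∀ x, ∀ᶠ k : ℕ in atTop, u k x = f x := fun x =>
    eventually_atTop.mpr ⟨⌈|f x|⌉₊, fun k hk =>
      clamp_eq_self ((Nat.le_ceil _).trans (Nat.cast_le.mpr hk))⟩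
  have h1 : Tendsto (fun k => ∫ x, u k x ^ 2 ∂μ) atTop (𝓝 (∫ x, f x ^ 2 ∂μ)) := by
    refine tendsto_integral_of_dominated_convergence (fun x => f x ^ 2)
      (fun k => ((hu_cont k).pow 2).aestronglyMeasurable) hint2
      (fun k => ae_of_all _ fun x => ?_) (ae_of_all _ fun x => ?_)
    · rw [Real.norm_eq_abs, abs_of_nonneg (sq_nonneg _)]
      calc u k x ^ 2 = |u k x| ^ 2 := (sq_abs _).symm
        _ ≤ |f x| ^ 2 := pow_le_pow_left₀ (abs_nonneg _) (habs_le k x) 2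
        _ = f x ^ 2 := sq_abs _
    · exact tendsto_const_nhds.congr' (by filter_upwards [hptw x] with k hk; rw [hk])
  have h2 : Tendsto (fun k => ∫ x, u k x ∂μ) atTop (𝓝 (∫ x, f x ∂μ)) := by
    refine tendsto_integral_of_dominated_convergence (fun x => |f x|)
      (fun k => (hu_cont k).aestronglyMeasurable) hfi.abs
      (fun k => ae_of_all _ fun x => ?_) (ae_of_all _ fun x => ?_)
    · rw [Real.norm_eq_abs]; exact habs_le k x
    · exact tendsto_const_nhds.congr' (by filter_upwards [hptw x] with k hk; rw [hk])
  have hlim : Tendsto (fun k => ∫ x, u k x ^ 2 ∂μ - (∫ x, u k x ∂μ) ^ 2) atTop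
      (𝓝 (∫ x, f x ^ 2 ∂μ - (∫ x, f x ∂μ) ^ 2)) := h1.sub (h2.pow 2)
  exact le_of_tendsto hlim (Eventually.of_forall fun k =>
    (hP k).trans (mul_le_mul_of_nonneg_left (hgrint k) hC0))

private lemma hasFDerivAt_coord {n : ℕ} (i : Fin n) (x : Euc n) :
    HasFDerivAt (fun y : Euc n => y i) (EuclideanSpace.proj (𝕜 := ℝ) i) x :=
  (EuclideanSpace.proj (𝕜 := ℝ) i).hasFDerivAt

private lemma hasFDerivAt_mulcoord {n : ℕ} (i j : Fin n) (x : Euc n) :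
    HasFDerivAt (fun y : Euc n => y i * y j)
      (x i • EuclideanSpace.proj (𝕜 := ℝ) j + x j • EuclideanSpace.proj (𝕜 := ℝ) i) x :=
  (hasFDerivAt_coord i x).mul (hasFDerivAt_coord j x)

private lemma toDual_single {n : ℕ} (i : Fin n) :
    InnerProductSpace.toDual ℝ (Euc n) (EuclideanSpace.single i (1:ℝ))
      = EuclideanSpace.proj (𝕜 := ℝ) i := by
  ext v
  simp [InnerProductSpace.toDual_apply_apply, EuclideanSpace.inner_single_left]

private lemma hasGradientAt_mulcoord {n : ℕ} (i j : Fin n) (x : Euc n) :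
    HasGradientAt (fun y : Euc n => y i * y j)
      (x i • EuclideanSpace.single j (1:ℝ) + x j • EuclideanSpace.single i (1:ℝ)) x := by
  rw [hasGradientAt_iff_hasFDerivAt]
  refine (hasFDerivAt_mulcoord i j x).congr_fderiv (Eq.symm ?_)
  ext v
  simp [InnerProductSpace.toDual_apply_apply, inner_add_left, real_inner_smul_left,
    EuclideanSpace.inner_single_left, mul_comm]

private lemma hasGradientAt_quadform {n : ℕ} (B : Matrix (Fin n) (Fin n) ℝ) (x : Euc n) :
    HasGradientAt (fun y : Euc n => ∑ i, ∑ j, B i j * (y i * y j))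
      (∑ i, ∑ j, B i j • (x i • EuclideanSpace.single j (1:ℝ)
        + x j • EuclideanSpace.single i (1:ℝ))) x := by
  rw [hasGradientAt_iff_hasFDerivAt]
  have hF : HasFDerivAt (fun y : Euc n => ∑ i, ∑ j, B i j * (y i * y j))
      (∑ i, ∑ j, B i j • (x i • EuclideanSpace.proj (𝕜 := ℝ) j
        + x j • EuclideanSpace.proj (𝕜 := ℝ) i)) x := by
    refine HasFDerivAt.fun_sum fun i _ => ?_
    refine HasFDerivAt.fun_sum fun j _ => ?_
    exact (hasFDerivAt_mulcoord i j x).const_mul (B i j)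
  refine hF.congr_fderiv (Eq.symm ?_)
  ext v
  simp [InnerProductSpace.toDual_apply_apply, inner_sum, inner_add_left, real_inner_smul_left,
    EuclideanSpace.inner_single_left, mul_comm]

private lemma quad_grad_coord {n : ℕ} (B : Matrix (Fin n) (Fin n) ℝ) (x : Euc n) (k : Fin n) :
    (∑ i, ∑ j, B i j • (x i • EuclideanSpace.single j (1:ℝ)
        + x j • EuclideanSpace.single i (1:ℝ))) k = ∑ j, (B k j + B j k) * x j := by
  have h := map_sum (EuclideanSpace.proj (𝕜 := ℝ) k)
    (fun i => ∑ j, B i j • (x i • EuclideanSpace.single j (1:ℝ)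
        + x j • EuclideanSpace.single i (1:ℝ))) Finset.univ
  have h2 : (∑ i, ∑ j, B i j • (x i • EuclideanSpace.single j (1:ℝ)
        + x j • EuclideanSpace.single i (1:ℝ))) k
      = ∑ i, ∑ j, B i j * (x i * (EuclideanSpace.single j (1:ℝ) k)
        + x j * (EuclideanSpace.single i (1:ℝ) k)) := by
    exact h.trans (by simp [map_sum, mul_add, mul_ite, mul_zero])
  rw [h2]
  simp only [EuclideanSpace.single_apply, mul_ite, mul_one, mul_zero, mul_add,
    Finset.sum_add_distrib, Finset.sum_ite_irrel, Finset.sum_ite_eq, Finset.sum_ite_eq',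
    Finset.mem_univ, if_true, add_mul]
  simp [Finset.sum_const_zero, Finset.sum_ite_eq, Finset.mem_univ]
  exact add_comm _ _

private lemma norm_sq_coords {n : ℕ} (v : Euc n) : ‖v‖ ^ 2 = ∑ i, v i ^ 2 := by
  rw [EuclideanSpace.norm_eq, Real.sq_sqrt (by positivity)]
  simp [sq_abs]

private lemma integral_cauchy_schwarz {n : ℕ} (μ : Measure (Euc n))
    (u v : Euc n → ℝ) (hu2 : Integrable (fun x => u x ^ 2) μ)
    (hv2 : Integrable (fun x => v x ^ 2) μ) (huv : Integrable (fun x => u x * v x) μ) :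
    (∫ x, u x * v x ∂μ) ^ 2 ≤ (∫ x, u x ^ 2 ∂μ) * ∫ x, v x ^ 2 ∂μ := by
  have key : ∀ t : ℝ, 0 ≤ (∫ x, v x ^ 2 ∂μ) * (t * t) + (2 * ∫ x, u x * v x ∂μ) * t
      + ∫ x, u x ^ 2 ∂μ := by
    intro t
    have hexp : (fun x => (u x + t * v x) ^ 2)
        = fun x => u x ^ 2 + (2 * t) * (u x * v x) + t ^ 2 * v x ^ 2 := by
      ext x; ring
    have hint : Integrable (fun x => (u x + t * v x) ^ 2) μ := by
      rw [hexp]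
      exact (hu2.add (huv.const_mul (2 * t))).add (hv2.const_mul (t ^ 2))
    have h0 : 0 ≤ ∫ x, (u x + t * v x) ^ 2 ∂μ := integral_nonneg fun x => sq_nonneg _
    have hI : ∫ x, (u x + t * v x) ^ 2 ∂μ = (∫ x, u x ^ 2 ∂μ)
        + 2 * t * (∫ x, u x * v x ∂μ) + t ^ 2 * ∫ x, v x ^ 2 ∂μ := by
      rw [hexp]
      rw [integral_add, integral_add, integral_const_mul, integral_const_mul]
      · exact hu2
      · exact huv.const_mul (2 * t)
      · exact hu2.add (huv.const_mul (2 * t))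
      · exact hv2.const_mul (t ^ 2)
    rw [hI] at h0
    nlinarith [h0]
  have hd := discrim_le_zero key
  rw [discrim] at hd
  nlinarith [hd]

private lemma contDiff_coord {n : ℕ} (i : Fin n) : ContDiff ℝ 1 fun x : Euc n => x i :=
  (EuclideanSpace.proj (𝕜 := ℝ) i).contDiff

private lemma locallyLipschitz_mulcoord {n : ℕ} (i j : Fin n) :
    LocallyLipschitz fun x : Euc n => x i * x j :=
  (((contDiff_coord i).mul (contDiff_coord j))).locallyLipschitz

private lemma locallyLipschitz_quadform {n : ℕ} (B : Matrix (Fin n) (Fin n) ℝ) :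
    LocallyLipschitz fun x : Euc n => ∑ i, ∑ j, B i j * (x i * x j) := by
  have : ContDiff ℝ 1 fun x : Euc n => ∑ i, ∑ j, B i j * (x i * x j) := by
    apply ContDiff.sum; intro i _
    apply ContDiff.sum; intro j _
    exact (contDiff_const (c := B i j)).mul ((contDiff_coord i).mul (contDiff_coord j))
  exact this.locallyLipschitz

end AuxProofs

set_option maxHeartbeats 2000000 in
/-- For an isotropic log-concave random vector `X` with law `μ` and finite Poincaré
constant, the matrix `B = E[X₁ (X ⊗ X)]` satisfies `‖B‖²_HS ≤ 4 C_P(X)`. -/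
theorem hs_norm_third_moment_bound {n : ℕ} (hn : 0 < n) (μ : Measure (Euc n))
    [IsProbabilityMeasure μ] (hlc : IsLogConcaveMeasure μ) (hiso : IsIsotropic μ)
    (hfin : (poincareSet μ).Nonempty)
    (B : Matrix (Fin n) (Fin n) ℝ)
    (hB : ∀ i j, B i j = ∫ x, x ⟨0, hn⟩ * (x i * x j) ∂μ) :
    ∑ i, ∑ j, (B i j) ^ 2 ≤ 4 * poincareConst μ := by
  classical
  obtain ⟨hμ0, hμ2⟩ := hiso
  set i0 : Fin n := ⟨0, hn⟩ with hi0
  have hcoord : ∀ i : Fin n, Continuous fun x : Euc n => x i :=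
    fun i => (EuclideanSpace.proj (𝕜 := ℝ) i).continuous
  have hxii : ∀ i, Integrable (fun x : Euc n => x i * x i) μ := by
    intro i
    by_contra h
    have h1 := integral_undef h
    have h2 := hμ2 i i
    rw [h1] at h2
    simp at h2
  have hxx : ∀ i j, Integrable (fun x : Euc n => x i * x j) μ := by
    intro i j
    refine ((hxii i).add (hxii j)).mono'
      (((hcoord i).mul (hcoord j)).aestronglyMeasurable) (ae_of_all _ fun x => ?_)
    simp only [Pi.add_apply]
    rw [Real.norm_eq_abs, abs_mul]
    nlinarith [sq_nonneg (|x i| - |x j|), sq_abs (x i), sq_abs (x j),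
      abs_nonneg (x i), abs_nonneg (x j)]
  have hxi : ∀ i, Integrable (fun x : Euc n => x i) μ := by
    intro i
    refine ((integrable_const (1:ℝ)).add (hxii i)).mono' (hcoord i).aestronglyMeasurable
      (ae_of_all _ fun x => ?_)
    simp only [Pi.add_apply]
    rw [Real.norm_eq_abs]
    nlinarith [sq_nonneg (|x i| - 1), sq_abs (x i), abs_nonneg (x i)]
  have hxvec : Integrable (fun x : Euc n => x) μ := by
    refine ((integrable_const (1:ℝ)).add
      (integrable_finset_sum _ (fun i (_ : i ∈ Finset.univ) => hxii i))).mono'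
      aestronglyMeasurable_id (ae_of_all _ fun x => ?_)
    simp only [Pi.add_apply]
    have h1 : ‖x‖ ^ 2 = ∑ i, x i * x i := by
      rw [norm_sq_coords]
      exact Finset.sum_congr rfl fun i _ => sq (x i)
    nlinarith [norm_nonneg x, sq_nonneg (‖x‖ - 1)]
  have hmean : ∀ i, ∫ x, x i ∂μ = 0 := by
    intro i
    have h := (EuclideanSpace.proj (𝕜 := ℝ) i).integral_comp_comm hxvec
    rw [hμ0] at h
    simpa using h
  have hBsymm : ∀ i j, B i j = B j i := by
    intro i j
    rw [hB i j, hB j i]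
    congr 1
    ext x
    ring
  set S := ∑ i, ∑ j, B i j ^ 2 with hS
  have hS0 : 0 ≤ S := Finset.sum_nonneg fun i _ => Finset.sum_nonneg fun j _ => sq_nonneg _
  set g : Euc n → ℝ := fun x => ∑ i, ∑ j, B i j * (x i * x j) with hg
  have hgint : Integrable g μ := by
    apply integrable_finset_sum
    intro i _
    apply integrable_finset_sum
    intro j _
    exact (hxx i j).const_mul (B i j)
  have hgradsq : ∀ x, ‖gradient g x‖ ^ 2 = ∑ k, (∑ j, (2 * B k j) * x j) ^ 2 := by
    intro x
    rw [(hasGradientAt_quadform B x).gradient, norm_sq_coords]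
    refine Finset.sum_congr rfl fun k _ => ?_
    rw [quad_grad_coord]
    congr 1
    refine Finset.sum_congr rfl fun j _ => ?_
    rw [← hBsymm k j]
    ring
  have hptsq : ∀ x : Euc n, ‖gradient g x‖ ^ 2
      = ∑ k, ∑ j, ∑ l, ((2 * B k j) * (2 * B k l)) * (x j * x l) := by
    intro x
    rw [hgradsq x]
    refine Finset.sum_congr rfl fun k _ => ?_
    rw [sq, Finset.sum_mul_sum]
    exact Finset.sum_congr rfl fun j _ => Finset.sum_congr rfl fun l _ => by ring
  have hgradint : Integrable (fun x => ‖gradient g x‖ ^ 2) μ := by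
    have h : Integrable (fun x : Euc n =>
        ∑ k, ∑ j, ∑ l, ((2 * B k j) * (2 * B k l)) * (x j * x l)) μ :=
      integrable_finset_sum _ fun k _ => integrable_finset_sum _ fun j _ =>
        integrable_finset_sum _ fun l _ => (hxx j l).const_mul _
    exact h.congr (ae_of_all _ fun x => (hptsq x).symm)
  have hgradval : ∫ x, ‖gradient g x‖ ^ 2 ∂μ = 4 * S := by
    have h1 : ∫ x, ‖gradient g x‖ ^ 2 ∂μ
        = ∑ k, ∑ j, ∑ l, ((2 * B k j) * (2 * B k l)) * ∫ x, x j * x l ∂μ := by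
      rw [integral_congr_ae (ae_of_all _ hptsq)]
      rw [integral_finset_sum _ fun k _ => integrable_finset_sum _ fun j _ =>
        integrable_finset_sum _ fun l _ => (hxx j l).const_mul _]
      refine Finset.sum_congr rfl fun k _ => ?_
      rw [integral_finset_sum _ fun j _ => integrable_finset_sum _ fun l _ =>
        (hxx j l).const_mul _]
      refine Finset.sum_congr rfl fun j _ => ?_
      rw [integral_finset_sum _ fun l _ => (hxx j l).const_mul _]
      exact Finset.sum_congr rfl fun l _ => integral_const_mul _ _
    rw [h1]
    simp_rw [hμ2]
    rw [hS, Finset.mul_sum]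
    refine Finset.sum_congr rfl fun k _ => ?_
    rw [Finset.mul_sum]
    refine Finset.sum_congr rfl fun j _ => ?_
    simp [mul_ite, mul_one, mul_zero, Finset.sum_ite_eq, Finset.mem_univ]
    ring
  have hglip : LocallyLipschitz g := locallyLipschitz_quadform B
  have key : ∀ C ∈ poincareSet μ, S / 4 ≤ C := by
    intro C hC
    have hC0 : 0 ≤ C := hC.1
    obtain ⟨hg2, hgvar⟩ := lemmaA μ hC g hglip hgint hgradint
    have hq2 : ∀ i j, Integrable (fun x : Euc n => (x i * x j) ^ 2) μ := by
      intro i j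
      have hqgrad : Integrable (fun x => ‖gradient (fun y : Euc n => y i * y j) x‖ ^ 2) μ := by
        refine (((hxx i i).const_mul 2).add ((hxx j j).const_mul 2)).mono'
          (meas_grad_sq _).aestronglyMeasurable (ae_of_all _ fun x => ?_)
        simp only [Pi.add_apply]
        rw [Real.norm_eq_abs, abs_of_nonneg (by positivity)]
        rw [(hasGradientAt_mulcoord i j x).gradient]
        have hnorm : ‖x i • EuclideanSpace.single j (1:ℝ) + x j • EuclideanSpace.single i 1‖
            ≤ |x i| + |x j| := by
          refine (norm_add_le _ _).trans ?_
          rw [norm_smul, norm_smul]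
          simp [EuclideanSpace.norm_single, Real.norm_eq_abs]
        calc ‖x i • EuclideanSpace.single j (1:ℝ) + x j • EuclideanSpace.single i 1‖ ^ 2
            ≤ (|x i| + |x j|) ^ 2 := pow_le_pow_left₀ (norm_nonneg _) hnorm 2
          _ ≤ 2 * (x i * x i) + 2 * (x j * x j) := by
              nlinarith [sq_abs (x i), sq_abs (x j), sq_nonneg (|x i| - |x j|)]
      exact (lemmaA μ hC _ (locallyLipschitz_mulcoord i j) (hxx i j) hqgrad).1
    have hx0q : ∀ i j, Integrable (fun x : Euc n => x i0 * (x i * x j)) μ := by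
      intro i j
      refine ((hxii i0).add (hq2 i j)).mono'
        ((hcoord i0).mul ((hcoord i).mul (hcoord j))).aestronglyMeasurable
        (ae_of_all _ fun x => ?_)
      simp only [Pi.add_apply]
      rw [Real.norm_eq_abs, abs_mul]
      nlinarith [sq_nonneg (|x i0| - |x i * x j|), sq_abs (x i0), sq_abs (x i * x j),
        abs_nonneg (x i0), abs_nonneg (x i * x j)]
    have hsplit : (fun x : Euc n => x i0 * g x)
        = fun x => ∑ i, ∑ j, B i j * (x i0 * (x i * x j)) := by
      ext x
      rw [hg]
      simp only
      rw [Finset.mul_sum]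
      refine Finset.sum_congr rfl fun i _ => ?_
      rw [Finset.mul_sum]
      exact Finset.sum_congr rfl fun j _ => by ring
    have hx0g_int : Integrable (fun x => x i0 * g x) μ := by
      rw [hsplit]
      exact integrable_finset_sum _ fun i _ => integrable_finset_sum _ fun j _ =>
        (hx0q i j).const_mul _
    have hx0g : ∫ x, x i0 * g x ∂μ = S := by
      rw [hsplit, integral_finset_sum (f := fun i (x : Euc n) => ∑ j, B i j * (x i0 * (x i * x j))) _ (fun i _ => integrable_finset_sum _ fun j _ =>
        (hx0q i j).const_mul _), hS]
      refine Finset.sum_congr rfl fun i _ => ?_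
      rw [integral_finset_sum _ (fun j _ => (hx0q i j).const_mul _)]
      refine Finset.sum_congr rfl fun j _ => ?_
      rw [integral_const_mul, ← hB i j]
      ring
    set c := ∫ x, g x ∂μ with hc
    have hu2 : Integrable (fun x : Euc n => (x i0) ^ 2) μ := by
      have := hxii i0
      simpa [pow_two] using this
    have hv2 : Integrable (fun x => (g x - c) ^ 2) μ := by
      have hexp : (fun x => (g x - c) ^ 2) = fun x => g x ^ 2 + (-2 * c) * g x + c ^ 2 := by
        ext x; ring
      rw [hexp]
      exact (hg2.add (hgint.const_mul _)).add (integrable_const _)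
    have huv : Integrable (fun x => x i0 * (g x - c)) μ := by
      have hexp : (fun x : Euc n => x i0 * (g x - c)) = fun x => x i0 * g x + (-c) * x i0 := by
        ext x; ring
      rw [hexp]
      exact hx0g_int.add ((hxi i0).const_mul _)
    have hcs := integral_cauchy_schwarz μ _ _ hu2 hv2 huv
    have e1 : ∫ x, x i0 * (g x - c) ∂μ = S := by
      have hexp : (fun x : Euc n => x i0 * (g x - c)) = fun x => x i0 * g x + (-c) * x i0 := by
        ext x; ring
      rw [hexp, integral_add hx0g_int ((hxi i0).const_mul _), integral_const_mul, hmean i0,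
        hx0g]
      ring
    have e2 : ∫ x, (x i0) ^ 2 ∂μ = 1 := by
      have h := hμ2 i0 i0
      rw [if_pos rfl] at h
      rw [← h]
      exact integral_congr_ae (ae_of_all _ fun x => sq (x i0))
    have e3 : ∫ x, (g x - c) ^ 2 ∂μ = (∫ x, g x ^ 2 ∂μ) - c ^ 2 := by
      have hexp : (fun x => (g x - c) ^ 2) = fun x => g x ^ 2 + (-2 * c) * g x + c ^ 2 := by
        ext x; ring
      rw [hexp]
      rw [integral_add, integral_add, integral_const_mul, integral_const]
      · simp only [measure_univ, ENNReal.toReal_one, smul_eq_mul, one_mul, probReal_univ]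
        rw [hc, ← hg]
        ring
      · exact hg2
      · exact hgint.const_mul _
      · exact hg2.add (hgint.const_mul _)
      · exact integrable_const _
    rw [e1, e2, e3, one_mul] at hcs
    have hfinal : S ^ 2 ≤ C * (4 * S) := by
      calc S ^ 2 ≤ (∫ x, g x ^ 2 ∂μ) - c ^ 2 := hcs
        _ ≤ C * ∫ x, ‖gradient g x‖ ^ 2 ∂μ := hgvar
        _ = C * (4 * S) := by rw [hgradval]
    rcases eq_or_lt_of_le hS0 with h | h
    · rw [← h]; linarith
    · nlinarith [hfinal]
  have hSinf : S / 4 ≤ poincareConst μ := le_csInf hfin key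
  linarith
end

section
/- Let γ_s(x) = (2πs)^{−n/2} e^{−|x|²/(2s)} denote the centered Gaussian density on ℝⁿ with covariance s·Id, and for r > 0 and a function f let S_r f(x) = rⁿ f(rx). Let s, t > 0 and set p = st/(s+t), q = t²/(s+t), r = t/(s+t). Then for every measurable function f: ℝⁿ → ℝ such that f γ_t is integrable, (f γ_t) * γ_s = S_r[ (f * γ_p) · γ_q ], where * denotes convolution. -/
open MeasureTheory Real
open scoped ENNReal RealInnerProductSpace

/-- Interchanging Gaussian convolution and multiplication by a Gaussian density:
`(f γ_t) * γ_s = S_r[(f * γ_p) γ_q]` with `p = st/(s+t)`, `q = t²/(s+t)`, `r = t/(s+t)`. -/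
theorem gaussian_conv_mult_identity {n : ℕ} (s t : ℝ) (hs : 0 < s) (ht : 0 < t)
    (p q r : ℝ) (hp : p = s * t / (s + t)) (hq : q = t ^ 2 / (s + t))
    (hr : r = t / (s + t))
    (f : Euc n → ℝ) (hf : Integrable (fun x => f x * gaussDensity n t x)) :
    ∀ x : Euc n,
      (∫ y, f y * gaussDensity n t y * gaussDensity n s (x - y)) =
        r ^ n * ((∫ y, f y * gaussDensity n p (r • x - y)) * gaussDensity n q (r • x)) := by
  intro x
  have hst : 0 < s + t := by linarith
  have hppos : 0 < p := by rw [hp]; positivity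
  have hqpos : 0 < q := by rw [hq]; positivity
  have hrpos : 0 < r := by rw [hr]; positivity
  have hπ := Real.pi_pos
  have key : ∀ y : Euc n,
      gaussDensity n t y * gaussDensity n s (x - y)
        = gaussDensity n p (r • x - y) * (r ^ n * gaussDensity n q (r • x)) := by
    intro y
    unfold gaussDensity
    have hE : -‖y‖ ^ 2 / (2 * t) + -‖x - y‖ ^ 2 / (2 * s)
        = -‖r • x - y‖ ^ 2 / (2 * p) + -‖r • x‖ ^ 2 / (2 * q) := by
      have h1 : ‖x - y‖ ^ 2 = ‖x‖ ^ 2 - 2 * ⟪x, y⟫ + ‖y‖ ^ 2 := norm_sub_sq_real x y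
      have h2 : ‖r • x - y‖ ^ 2 = r ^ 2 * ‖x‖ ^ 2 - 2 * (r * ⟪x, y⟫) + ‖y‖ ^ 2 := by
        rw [norm_sub_sq_real, real_inner_smul_left, norm_smul, Real.norm_eq_abs,
          abs_of_pos hrpos, mul_pow]
      have h3 : ‖r • x‖ ^ 2 = r ^ 2 * ‖x‖ ^ 2 := by
        rw [norm_smul, Real.norm_eq_abs, abs_of_pos hrpos, mul_pow]
      rw [h1, h2, h3, hp, hq, hr]
      field_simp
      ring
    have hC : (2 * π * t) ^ (-(n : ℝ) / 2) * (2 * π * s) ^ (-(n : ℝ) / 2)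
        = (2 * π * p) ^ (-(n : ℝ) / 2) * (r ^ n * (2 * π * q) ^ (-(n : ℝ) / 2)) := by
      have hrn : (r : ℝ) ^ n = (r ^ 2) ^ ((n : ℝ) / 2) := by
        have h2n : ((2 : ℕ) : ℝ) * ((n : ℝ) / 2) = ((n : ℕ) : ℝ) := by push_cast; ring
        rw [← Real.rpow_natCast r 2, ← Real.rpow_mul hrpos.le, h2n, Real.rpow_natCast]
      have neg1 : (2 * π * t) ^ (-(n : ℝ) / 2) = ((2 * π * t)⁻¹) ^ ((n : ℝ) / 2) := by
        rw [Real.inv_rpow (by positivity), ← Real.rpow_neg (by positivity)]; ring_nf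
      have neg2 : (2 * π * s) ^ (-(n : ℝ) / 2) = ((2 * π * s)⁻¹) ^ ((n : ℝ) / 2) := by
        rw [Real.inv_rpow (by positivity), ← Real.rpow_neg (by positivity)]; ring_nf
      have neg3 : (2 * π * p) ^ (-(n : ℝ) / 2) = ((2 * π * p)⁻¹) ^ ((n : ℝ) / 2) := by
        rw [Real.inv_rpow (by positivity), ← Real.rpow_neg (by positivity)]; ring_nf
      have neg4 : (2 * π * q) ^ (-(n : ℝ) / 2) = ((2 * π * q)⁻¹) ^ ((n : ℝ) / 2) := by
        rw [Real.inv_rpow (by positivity), ← Real.rpow_neg (by positivity)]; ring_nf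
      rw [hrn, neg1, neg2, neg3, neg4,
        ← Real.mul_rpow (by positivity) (by positivity),
        ← Real.mul_rpow (by positivity) (by positivity),
        ← Real.mul_rpow (by positivity) (by positivity)]
      congr 1
      rw [hp, hq, hr]
      field_simp
    calc (2 * π * t) ^ (-(n : ℝ) / 2) * Real.exp (-‖y‖ ^ 2 / (2 * t)) *
          ((2 * π * s) ^ (-(n : ℝ) / 2) * Real.exp (-‖x - y‖ ^ 2 / (2 * s)))
        = ((2 * π * t) ^ (-(n : ℝ) / 2) * (2 * π * s) ^ (-(n : ℝ) / 2)) *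
            Real.exp (-‖y‖ ^ 2 / (2 * t) + -‖x - y‖ ^ 2 / (2 * s)) := by
          rw [Real.exp_add]; ring
      _ = ((2 * π * p) ^ (-(n : ℝ) / 2) * (r ^ n * (2 * π * q) ^ (-(n : ℝ) / 2))) *
            Real.exp (-‖r • x - y‖ ^ 2 / (2 * p) + -‖r • x‖ ^ 2 / (2 * q)) := by
          rw [hC, hE]
      _ = _ := by rw [Real.exp_add]; ring
  have hfun : (fun y => f y * gaussDensity n t y * gaussDensity n s (x - y))
      = fun y => (f y * gaussDensity n p (r • x - y)) * (r ^ n * gaussDensity n q (r • x)) := by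
    funext y
    rw [mul_assoc, key y]
    ring
  rw [hfun, integral_mul_const]
  ring
end
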